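/- Define u₄ : ℝ² → ℝ by u₄(x₁,x₂) = 0 if x₂ ≤ 0; u₄(x₁,x₂) = x₂/x₁ if x₂ ≥ 0, x₁ ≠ 0 and x₁²/2 ≥ x₂; and u₄(x₁,x₂) = x₁(x₂+1)/(x₁²+2) otherwise. Let 𝒞 = {(x₁,x₂) ∈ ℝ² : x₂ ≤ 0}. Then the vector field G(x₁,x₂) = (1/2, u₄(x₁,x₂)) satisfies the sub-tangentiality condition G(x) ∈ T_𝒞(x) for every x ∈ 𝒞 (where T_𝒞(x) is the tangent cone to 𝒞 at x; in particular T_𝒞(x) = ℝ² if x₂ < 0 and T_𝒞(x₁,0) = {(ξ₁,ξ₂) : ξ₂ ≤ 0}), yet 𝒞 is not forward invariant for ẋ = G(x): the solution y₂(t) = (t/2, t²/8) satisfies y₂(0) ∈ 𝒞 and y₂(t) ∉ 𝒞 for all t > 0. -/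

import Mathlib

open Set Filter

/-- The fourth component of the parametric optimizer of Robinson's counterexample. -/
noncomputable def u4 (x : ℝ × ℝ) : ℝ :=
  if x.2 ≤ 0 then 0
  else if 0 ≤ x.2 ∧ x.1 ≠ 0 ∧ x.2 ≤ x.1 ^ 2 / 2 then x.2 / x.1
  else x.1 * (x.2 + 1) / (x.1 ^ 2 + 2)

/-- The tangent cone `T_𝒞(x) = {v : liminf_{h→0⁺} dist(x+hv, 𝒞)/h = 0}`. -/
noncomputable def tangentConeTo (C : Set (ℝ × ℝ)) (x : ℝ × ℝ) : Set (ℝ × ℝ) :=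
  {v | Filter.liminf (fun h : ℝ => Metric.infDist (x + h • v) C / h)
      (nhdsWithin 0 (Ioi 0)) = 0}

open Topology

/-! The half-plane `𝒞` is at sup-distance `max x₂ 0` from `x`, so its tangent cone is the whole
plane in the interior and `{ξ₂ ≤ 0}` on the boundary line; since `u₄ = 0` on `𝒞`, the field
`G = (1/2, u₄)` is sub-tangential. On the parabola `x₂ = x₁²/2`, however, `u₄ = x₂/x₁ = x₁/2`,
which is exactly `d(x₁²/2)/dt` when `ẋ₁ = 1/2`, so `t ↦ (t/2, t²/8)` solves `ẋ = G(x)` and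
leaves `𝒞` at once. This is possible because `u₄` is not Lipschitz at the origin: the solution
`t ↦ (t/2, 0)` from the same initial point stays in `𝒞`. -/

lemma u4_of_snd_nonpos {x : ℝ × ℝ} (hx : x.2 ≤ 0) : u4 x = 0 := if_pos hx

lemma u4_parabola (s : ℝ) : u4 (s, s ^ 2 / 2) = s / 2 := by
  rcases eq_or_ne s 0 with rfl | hs
  · simp [u4]
  · have hpos : ¬ s ^ 2 / 2 ≤ 0 := not_le.2 (by positivity)
    rw [u4, if_neg hpos, if_pos ⟨by positivity, hs, le_rfl⟩]
    field_simp

lemma infDist_setOf_snd_nonpos (p : ℝ × ℝ) :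
    Metric.infDist p {x : ℝ × ℝ | x.2 ≤ 0} = max p.2 0 := by
  apply le_antisymm
  · have hproj : ((p.1, min p.2 0) : ℝ × ℝ) ∈ {x : ℝ × ℝ | x.2 ≤ 0} := by simp
    refine (Metric.infDist_le_dist_of_mem hproj).trans_eq ?_
    rcases le_total p.2 0 with h | h <;> simp [Prod.dist_eq, h]
  · have hne : {x : ℝ × ℝ | x.2 ≤ 0}.Nonempty := ⟨0, by simp⟩
    refine (Metric.le_infDist hne).2 fun q hq => max_le ?_ dist_nonneg
    have hq : q.2 ≤ 0 := hq
    calc p.2 ≤ p.2 - q.2 := by linarith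
      _ ≤ dist p.2 q.2 := le_abs_self _
      _ ≤ dist p q := (le_max_right _ _).trans_eq Prod.dist_eq.symm

lemma mem_tangentConeTo_of_eventually_mem {C : Set (ℝ × ℝ)} {x v : ℝ × ℝ}
    (h : ∀ᶠ h : ℝ in 𝓝[>] 0, x + h • v ∈ C) : v ∈ tangentConeTo C x := by
  have hzero : ∀ᶠ h : ℝ in 𝓝[>] 0, Metric.infDist (x + h • v) C / h = 0 :=
    h.mono fun h hmem => by rw [Metric.infDist_zero_of_mem hmem, zero_div]
  exact (liminf_congr hzero).trans (liminf_const 0)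

lemma tangentConeTo_setOf_snd_nonpos_of_snd_neg {x : ℝ × ℝ} (hx : x.2 < 0) :
    tangentConeTo {x : ℝ × ℝ | x.2 ≤ 0} x = univ := by
  refine eq_univ_of_forall fun v => mem_tangentConeTo_of_eventually_mem ?_
  have hline : Tendsto (fun h : ℝ => x + h • v) (𝓝 0) (𝓝 x) :=
    (continuous_const.add (continuous_id.smul continuous_const)).tendsto' 0 x (by simp)
  have hopen : IsOpen {p : ℝ × ℝ | p.2 < 0} := isOpen_lt continuous_snd continuous_const
  exact ((hline.eventually (hopen.mem_nhds hx)).filter_mono nhdsWithin_le_nhds).mono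
    fun _ => le_of_lt

lemma tangentConeTo_setOf_snd_nonpos_of_snd_eq_zero {x : ℝ × ℝ} (hx : x.2 = 0) :
    tangentConeTo {x : ℝ × ℝ | x.2 ≤ 0} x = {v : ℝ × ℝ | v.2 ≤ 0} := by
  ext v
  constructor
  · intro hv
    show v.2 ≤ 0
    by_contra! hv2
    have hratio : ∀ᶠ h : ℝ in 𝓝[>] 0,
        Metric.infDist (x + h • v) {x : ℝ × ℝ | x.2 ≤ 0} / h = v.2 := by
      filter_upwards [self_mem_nhdsWithin] with h (hh : 0 < h)
      have : 0 ≤ h * v.2 := by positivity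
      simp [infDist_setOf_snd_nonpos, hx, this, hh.ne']
    exact hv2.ne' ((liminf_const v.2).symm.trans ((liminf_congr hratio).symm.trans hv))
  · intro (hv2 : v.2 ≤ 0)
    refine mem_tangentConeTo_of_eventually_mem ?_
    filter_upwards [self_mem_nhdsWithin] with h (hh : 0 < h)
    show x.2 + h * v.2 ≤ 0
    nlinarith

/-- For `𝒞 = {x : x₂ ≤ 0}` the vector field `G(x) = (1/2, u₄(x))` satisfies
the sub-tangentiality condition `G(x) ∈ T_𝒞(x)` for all `x ∈ 𝒞` (with
`T_𝒞(x) = ℝ²` for `x₂ < 0` and `T_𝒞(x₁,0) = {ξ : ξ₂ ≤ 0}`), yet `𝒞` is not forward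
invariant: the solution `y₂(t) = (t/2, t²/8)` starts in `𝒞` and leaves it for all `t > 0`. -/
theorem stmt_17 :
    (∀ x ∈ {x : ℝ × ℝ | x.2 ≤ 0},
      ((1 / 2, u4 x) : ℝ × ℝ) ∈ tangentConeTo {x : ℝ × ℝ | x.2 ≤ 0} x) ∧
    (∀ x : ℝ × ℝ, x.2 < 0 → tangentConeTo {x : ℝ × ℝ | x.2 ≤ 0} x = univ) ∧
    (∀ x₁ : ℝ, tangentConeTo {x : ℝ × ℝ | x.2 ≤ 0} (x₁, 0) = {v : ℝ × ℝ | v.2 ≤ 0}) ∧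
    (((fun t : ℝ => ((t / 2, t ^ 2 / 8) : ℝ × ℝ)) 0 ∈ {x : ℝ × ℝ | x.2 ≤ 0}) ∧
      (∀ t : ℝ, 0 ≤ t → HasDerivWithinAt (fun t : ℝ => ((t / 2, t ^ 2 / 8) : ℝ × ℝ))
        (1 / 2, u4 (t / 2, t ^ 2 / 8)) (Ici 0) t) ∧
      (∀ t : ℝ, 0 < t → ((t / 2, t ^ 2 / 8) : ℝ × ℝ) ∉ {x : ℝ × ℝ | x.2 ≤ 0})) := by
  refine ⟨fun x (hx : x.2 ≤ 0) => ?_, fun x => tangentConeTo_setOf_snd_nonpos_of_snd_neg,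
    fun x₁ => tangentConeTo_setOf_snd_nonpos_of_snd_eq_zero rfl, by simp, fun t _ => ?_,
    fun t ht => not_le.2 (show (0 : ℝ) < t ^ 2 / 8 by positivity)⟩
  · rcases hx.lt_or_eq with hneg | hzero
    · simp [tangentConeTo_setOf_snd_nonpos_of_snd_neg hneg]
    · simp [tangentConeTo_setOf_snd_nonpos_of_snd_eq_zero hzero, u4_of_snd_nonpos hx]
  · have hx₁ : HasDerivAt (fun t : ℝ => t / 2) (1 / 2) t := (hasDerivAt_id t).div_const 2
    have hx₂ : HasDerivAt (fun t : ℝ => t ^ 2 / 8) (t / 4) t :=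
      ((hasDerivAt_pow 2 t).div_const 8).congr_deriv (by ring)
    have hu : u4 (t / 2, t ^ 2 / 8) = t / 4 := by
      rw [show t ^ 2 / 8 = (t / 2) ^ 2 / 2 by ring, u4_parabola]
      ring
    rw [hu]
    exact (hx₁.prodMk hx₂).hasDerivWithinAt
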